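/- arXiv:2511.22811 — 4 statements merged into one kernel-verified Lean document; each statement's English description precedes it below -/
import Mathlib

section
/- Let p ≥ 7 be prime and m a positive integer with m ∉ {1,2,3,4,6,8,12} and φ(m) ≤ 8 (Euler totient). If ζ_m is a primitive m-th root of unity in ℚ̄, then [ℚ(ζ_m √p) : ℚ] > 4. -/
/-!
Write `α = ζ √p`, so that `α² = ζ² p` with `ζ²` a primitive `n`-th root of unity,
`n = m / gcd(m, 2)`, and `ℚ(ζ²) ⊆ ℚ(α)` has degree `φ(n)`. If `p ∣ n` then already
`φ(n) ≥ p - 1 > 4`. Otherwise `p` is unramified in `ℤ[ζ²]`, the ring of integers of `ℚ(ζ²)`: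
there `x² ∈ (p)` forces `x ∈ (p)`. So `α ∈ ℚ(ζ²)` would give `α = p β` with `β` integral and
then `p β² = ζ²`, making `1 / p` integral. Hence `ℚ(α) ⊋ ℚ(ζ²)` and `[ℚ(α) : ℚ] > φ(n) ≥ 4`,
the last bound because `φ(n) < 4` forces `n ∣ 12`, i.e. `m ∣ 24`, and the excluded values of
`m` are exactly the divisors of `24` with `φ(n) < 4`.
-/

open Polynomial IntermediateField

theorem Nat.prime_pow_dvd_twelve_of_totient_lt_four {q e : ℕ} (hq : q.Prime)
    (h : (q ^ e).totient < 4) : q ^ e ∣ 12 := by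
  rcases e with _ | e
  · simp
  rw [Nat.totient_prime_pow_succ hq] at h
  have hq1 : 1 ≤ q - 1 := by have := hq.two_le; omega
  have hq4 : q ≤ 4 := by
    have := Nat.le_mul_of_pos_left (q - 1) (pow_pos hq.pos e); omega
  have he : e < 2 := by
    refine (Nat.pow_lt_pow_iff_right one_lt_two).1 ?_
    calc 2 ^ e ≤ q ^ e := Nat.pow_le_pow_left hq.two_le e
      _ ≤ q ^ e * (q - 1) := Nat.le_mul_of_pos_right _ hq1
      _ < 2 ^ 2 := h
  interval_cases q <;> interval_cases e <;> simp_all +decide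

theorem Nat.dvd_twelve_of_totient_lt_four {k : ℕ} (hk : k ≠ 0) (h : k.totient < 4) :
    k ∣ 12 := by
  refine (Nat.dvd_iff_prime_pow_dvd_dvd 12 k).2 fun q e hq hqe ↦ ?_
  refine Nat.prime_pow_dvd_twelve_of_totient_lt_four hq (lt_of_le_of_lt ?_ h)
  exact Nat.le_of_dvd (Nat.totient_pos.2 (Nat.pos_of_ne_zero hk)) (Nat.totient_dvd_of_dvd hqe)

theorem IsPrimitiveRoot.pow_two_gcd {M : Type*} [CommMonoid M] {ζ : M} {m : ℕ}
    (hζ : IsPrimitiveRoot ζ m) : IsPrimitiveRoot (ζ ^ 2) (m / m.gcd 2) := by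
  rw [hζ.eq_orderOf, ← orderOf_pow' ζ two_ne_zero]
  exact IsPrimitiveRoot.orderOf _

variable {K : Type*} [Field K] [CharZero K]

-- `p` is unramified in `ℤ[ζ]`: the reduction of `Φₙ` modulo `p` is squarefree.
theorem IsPrimitiveRoot.exists_eq_natCast_mul_of_sq_eq {ζ : K} {n p : ℕ}
    (hζ : IsPrimitiveRoot ζ n) (hn : 0 < n) (hp : p.Prime) (hpn : ¬ p ∣ n) {P Q : ℤ[X]}
    (h : aeval ζ P ^ 2 = p * aeval ζ Q) : ∃ S : ℤ[X], aeval ζ P = p * aeval ζ S := by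
  have : Fact p.Prime := ⟨hp⟩
  set f := Int.castRingHom (ZMod p)
  have hdvd : cyclotomic n ℤ ∣ P ^ 2 - C (p : ℤ) * Q := by
    rw [cyclotomic_eq_minpoly hζ hn]
    exact minpoly.isIntegrallyClosed_dvd (hζ.isIntegral hn) (by simp [h])
  have hsq : Squarefree (cyclotomic n (ZMod p)) :=
    (X_pow_sub_one_separable_iff.2 (by simpa [ZMod.natCast_eq_zero_iff] using hpn)).squarefree
      |>.squarefree_of_dvd (cyclotomic.dvd_X_pow_sub_one n _)
  obtain ⟨R, hR⟩ : cyclotomic n (ZMod p) ∣ P.map f := by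
    rw [← hsq.dvd_pow_iff_dvd two_ne_zero]
    simpa [f, map_cyclotomic] using Polynomial.map_dvd f hdvd
  obtain ⟨R, rfl⟩ := Polynomial.map_surjective f ZMod.intCast_surjective R
  obtain ⟨S, hS⟩ : C (p : ℤ) ∣ P - cyclotomic n ℤ * R := by
    rw [C_dvd_iff_dvd_coeff]
    intro i
    rw [← ZMod.intCast_zmod_eq_zero_iff_dvd, ← eq_intCast f, ← coeff_map]
    simp [hR, map_cyclotomic]
  refine ⟨S, ?_⟩
  have hΦ : aeval ζ (cyclotomic n ℤ) = 0 := by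
    rw [cyclotomic_eq_minpoly hζ hn]; exact minpoly.aeval ℤ ζ
  simpa only [map_sub, map_mul, hΦ, zero_mul, sub_zero, aeval_C, algebraMap_int_eq,
    Int.coe_castRingHom, Int.cast_natCast] using congrArg (aeval ζ) hS

theorem IsPrimitiveRoot.mem_adjoin_int_of_isIntegral {ζ x : K} {n : ℕ} [NeZero n]
    (hζ : IsPrimitiveRoot ζ n) (hx : x ∈ ℚ⟮ζ⟯) (hxint : IsIntegral ℤ x) :
    x ∈ Algebra.adjoin ℤ {ζ} := by
  have : IsCyclotomicExtension {n} ℚ ℚ⟮ζ⟯ := by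
    change IsCyclotomicExtension {n} ℚ ℚ⟮ζ⟯.toSubalgebra
    rw [adjoin_simple_toSubalgebra_of_isAlgebraic
      (hζ.isIntegral (NeZero.pos n)).tower_top.isAlgebraic]
    exact hζ.adjoin_isCyclotomicExtension ℚ
  have := IsCyclotomicExtension.Rat.isIntegralClosure_adjoin_singleton
    (IsPrimitiveRoot.coe_submonoidClass_iff.mp hζ : IsPrimitiveRoot (AdjoinSimple.gen ℚ ζ) n)
  let ι : ℚ⟮ζ⟯ →ₐ[ℤ] K := ℚ⟮ζ⟯.val.restrictScalars ℤ
  obtain ⟨y, hy⟩ := IsIntegralClosure.isIntegral_iff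
    (A := Algebra.adjoin ℤ {AdjoinSimple.gen ℚ ζ}) (x := (⟨x, hx⟩ : ℚ⟮ζ⟯)) |>.1
    ((isIntegral_algHom_iff ι ℚ⟮ζ⟯.val.injective).1 hxint)
  have hmap : (Algebra.adjoin ℤ {AdjoinSimple.gen ℚ ζ}).map ι = Algebra.adjoin ℤ {ζ} :=
    AlgHom.map_adjoin_singleton ι _
  rw [← hmap]
  exact ⟨y, y.2, by simpa [ι] using congrArg Subtype.val hy⟩

theorem natCast_mul_ne_one_of_isIntegral {x : K} (hx : IsIntegral ℤ x) {p : ℕ} (hp : p ≠ 1) :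
    (p : K) * x ≠ 1 := by
  intro h
  have hp0 : p ≠ 0 := by rintro rfl; simp at h
  have hx' : x = algebraMap ℚ K (p : ℚ)⁻¹ := by
    rw [map_inv₀, map_natCast]
    exact eq_inv_of_mul_eq_one_right h
  rw [hx', isIntegral_algebraMap_iff (algebraMap ℚ K).injective,
    IsIntegrallyClosed.isIntegral_iff] at hx
  obtain ⟨z, hz⟩ := hx
  have hpz : (p : ℚ) * z = 1 := by
    rw [← eq_intCast (algebraMap ℤ ℚ), hz, mul_inv_cancel₀ (by exact_mod_cast hp0)]
  replace hpz : (p : ℤ) * z = 1 := by exact_mod_cast hpz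
  exact hp (by exact_mod_cast Int.eq_one_of_mul_eq_one_right (by positivity) hpz)

theorem IsPrimitiveRoot.notMem_adjoin_of_sq_eq_mul_prime {ζ α : K} {n p : ℕ}
    (hζ : IsPrimitiveRoot ζ n) (hn : 0 < n) (hp : p.Prime) (hpn : ¬ p ∣ n)
    (hα : α ^ 2 = ζ * p) : α ∉ ℚ⟮ζ⟯ := by
  intro hαmem
  have : NeZero n := ⟨hn.ne'⟩
  have hζint := hζ.isIntegral hn
  have hαint : IsIntegral ℤ α := .of_pow two_pos (hα ▸ hζint.mul (isIntegral_natCast p))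
  have hαZ := hζ.mem_adjoin_int_of_isIntegral hαmem hαint
  rw [Algebra.adjoin_singleton_eq_range_aeval] at hαZ
  obtain ⟨P, rfl⟩ := (AlgHom.mem_range _).1 hαZ
  obtain ⟨S, hS⟩ := hζ.exists_eq_natCast_mul_of_sq_eq hn hp hpn (Q := X)
    (by rw [hα, aeval_X, mul_comm])
  have hp0 : (p : K) ≠ 0 := by exact_mod_cast hp.ne_zero
  have hζS : p * aeval ζ S ^ 2 = ζ := by
    apply mul_left_cancel₀ hp0
    linear_combination hα - (aeval ζ P + p * aeval ζ S) * hS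
  have hζinv : ζ * ζ ^ (n - 1) = 1 := by
    rw [← pow_succ', Nat.sub_add_cancel hn, hζ.pow_eq_one]
  -- `ζ = p S(ζ)²` exhibits `1 / p` as an algebraic integer.
  refine natCast_mul_ne_one_of_isIntegral (x := aeval ζ S ^ 2 * ζ ^ (n - 1)) ?_ hp.ne_one
    (by linear_combination ζ ^ (n - 1) * hζS + hζinv)
  exact ((IsIntegral.of_mem_of_fg _ hζint.fg_adjoin_singleton _
    (aeval_mem_adjoin_singleton _ _)).pow 2).mul (hζint.pow _)

theorem IsPrimitiveRoot.finrank_adjoin_rat {ζ : K} {n : ℕ} (hζ : IsPrimitiveRoot ζ n)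
    (hn : 0 < n) : Module.finrank ℚ ℚ⟮ζ⟯ = n.totient := by
  rw [adjoin.finrank (hζ.isIntegral hn).tower_top, ← cyclotomic_eq_minpoly_rat hζ hn,
    natDegree_cyclotomic]

section SqrtMulRootOfUnity

variable {ζ α : K} {n p : ℕ}

theorem adjoin_le_adjoin_of_sq_eq_mul (hp : p ≠ 0) (hα : α ^ 2 = ζ * p) : ℚ⟮ζ⟯ ≤ ℚ⟮α⟯ := by
  have hζ : ζ = α ^ 2 * (p : K)⁻¹ := by
    rw [hα, mul_inv_cancel_right₀ (Nat.cast_ne_zero.2 hp)]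
  rw [adjoin_simple_le_iff, hζ]
  exact mul_mem (pow_mem (mem_adjoin_simple_self ℚ α) 2) 
    (inv_mem (IntermediateField.natCast_mem _ p))

theorem finiteDimensional_adjoin_of_sq_eq_mul (hζ : IsPrimitiveRoot ζ n) (hn : 0 < n)
    (hα : α ^ 2 = ζ * p) : FiniteDimensional ℚ ℚ⟮α⟯ :=
  adjoin.finiteDimensional <| .of_pow two_pos <|
    hα ▸ (hζ.isIntegral hn).tower_top.mul (isIntegral_natCast p)

theorem totient_le_finrank_adjoin_of_sq_eq_mul (hζ : IsPrimitiveRoot ζ n) (hn : 0 < n)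
    (hp : p ≠ 0) (hα : α ^ 2 = ζ * p) : n.totient ≤ Module.finrank ℚ ℚ⟮α⟯ := by
  have := finiteDimensional_adjoin_of_sq_eq_mul hζ hn hα
  exact hζ.finrank_adjoin_rat hn ▸ finrank_le_of_le_right (adjoin_le_adjoin_of_sq_eq_mul hp hα)

theorem totient_lt_finrank_adjoin_of_sq_eq_mul (hζ : IsPrimitiveRoot ζ n) (hn : 0 < n)
    (hp : p.Prime) (hpn : ¬ p ∣ n) (hα : α ^ 2 = ζ * p) :
    n.totient < Module.finrank ℚ ℚ⟮α⟯ := by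
  have := finiteDimensional_adjoin_of_sq_eq_mul hζ hn hα
  have hle := adjoin_le_adjoin_of_sq_eq_mul hp.ne_zero hα
  refine hζ.finrank_adjoin_rat hn ▸ lt_of_not_ge fun h ↦ ?_
  have heq := eq_of_le_of_finrank_le hle h
  exact hζ.notMem_adjoin_of_sq_eq_mul_prime hn hp hpn hα (heq ▸ mem_adjoin_simple_self ℚ α)

end SqrtMulRootOfUnity

theorem stmt1_general (p : ℕ) (hp : p.Prime) (hp7 : 7 ≤ p) (m : ℕ) (hm0 : 0 < m)
    (hm : m ∉ ({1, 2, 3, 4, 6, 8, 12} : Set ℕ))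
    (ζ : ℂ) (hζ : IsPrimitiveRoot ζ m) (s : ℂ) (hs : s ^ 2 = (p : ℂ)) :
    4 < Module.finrank ℚ ↥(IntermediateField.adjoin ℚ ({ζ * s} : Set ℂ)) := by
  set n := m / m.gcd 2
  have hn : 0 < n := Nat.div_pos (Nat.gcd_le_left 2 hm0) (Nat.gcd_pos_of_pos_left 2 hm0)
  have hα : (ζ * s) ^ 2 = ζ ^ 2 * p := by rw [mul_pow, hs]
  by_cases hpn : p ∣ n
  · calc 4 < p - 1 := by omega
      _ ≤ n.totient := Nat.le_of_dvd (Nat.totient_pos.2 hn)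
          (Nat.totient_prime hp ▸ Nat.totient_dvd_of_dvd hpn)
      _ ≤ _ := totient_le_finrank_adjoin_of_sq_eq_mul hζ.pow_two_gcd hn hp.ne_zero hα
  · refine lt_of_le_of_lt ?_
      (totient_lt_finrank_adjoin_of_sq_eq_mul hζ.pow_two_gcd hn hp hpn hα)
    by_contra! h
    have hm24 : m ∣ 24 := by
      rw [← Nat.div_mul_cancel (Nat.gcd_dvd_left m 2)]
      exact Nat.mul_dvd_mul (Nat.dvd_twelve_of_totient_lt_four hn.ne' h) (Nat.gcd_dvd_right m 2)
    have := Nat.le_of_dvd (by norm_num) hm24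
    simp only [Set.mem_insert_iff, Set.mem_singleton_iff, not_or] at hm
    interval_cases m <;> simp_all +decide

theorem stmt1 (p : ℕ) (hp : p.Prime) (hp7 : 7 ≤ p) (m : ℕ) (hm0 : 0 < m)
    (hm : m ∉ ({1, 2, 3, 4, 6, 8, 12} : Set ℕ)) (hphi : Nat.totient m ≤ 8)
    (ζ : ℂ) (hζ : IsPrimitiveRoot ζ m) (s : ℂ) (hs : s ^ 2 = (p : ℂ)) :
    4 < Module.finrank ℚ ↥(IntermediateField.adjoin ℚ ({ζ * s} : Set ℂ)) :=
  stmt1_general p hp hp7 m hm0 hm ζ hζ s hs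
end

section
/- Let p ≥ 5 be prime, ε ∈ {0,1,−1}, and a, b ∈ ℚ_p with ab ≠ −1. Set c = −(a² + εp + b²p²)/(ab+1). Then v_p(c) ≥ 1 if and only if (v_p(a) ≥ 1 and v_p(b) ≥ 0) or v_p(a) = v_p(b) + 1. -/
/-!
Put `β = b p`. Then `c (aβ + p) = -p (a² + εp + β²)`, so `v(c) ≥ 1` iff
`v(aβ + p) ≤ v(a² + εp + β²)`, and the right-hand side reads
`(v(a) ≥ 1 ∧ v(β) ≥ 1) ∨ v(a) = v(β)`. When it holds, `v(aβ) ≠ 1` (it is even, `⊤` or at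
least `2`), so `v(aβ + p) = min(v(aβ), 1)`, which bounds each of `v(a²)`, `v(εp)`, `v(β²)` from
below. Otherwise, say `v(a) < v(β)`; then `v(a) ≤ 0`, and `a²` dominates the sum, whose
valuation `2 v(a)` is smaller than both `v(aβ)` and `1`.
-/

namespace WithTop

lemma add_self_ne_one (x : WithTop ℤ) : x + x ≠ 1 := by
  induction x using WithTop.recTopCoe with
  | top => simp
  | coe x => norm_cast; omega

lemma add_self_lt_one_of_lt_one {x : WithTop ℤ} (hx : x < 1) : x + x < 1 := by
  induction x using WithTop.recTopCoe with
  | top => simp at hx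
  | coe x => norm_cast at hx ⊢; omega

lemma one_lt_add_of_one_le {x y : WithTop ℤ} (hx : 1 ≤ x) (hy : 1 ≤ y) : 1 < x + y := by
  induction x using WithTop.recTopCoe with
  | top => simp
  | coe x =>
    induction y using WithTop.recTopCoe with
    | top => simp
    | coe y => norm_cast at hx hy ⊢; omega

end WithTop

namespace AddValuation

variable {R : Type*} [CommRing R] (v : AddValuation R (WithTop ℤ)) {π ε a b : R}

lemma one_le_map_mul_of_map_eq_one (hπ : v π = 1) (hε : 0 ≤ v ε) : 1 ≤ v (ε * π) := by
  rw [map_mul, hπ]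
  exact le_add_of_nonneg_left hε

lemma map_mul_add_le_map_sq_add_sq (hπ : v π = 1) (hε : 0 ≤ v ε)
    (h : (1 ≤ v a ∧ 1 ≤ v b) ∨ v a = v b) :
    v (a * b + π) ≤ v (a ^ 2 + ε * π + b ^ 2) := by
  have hab : v (a * b) ≠ v π := by
    rw [hπ, map_mul]
    rcases h with ⟨ha, hb⟩ | h
    · exact (WithTop.one_lt_add_of_one_le ha hb).ne'
    · rw [h]; exact WithTop.add_self_ne_one _
  have hsq : min (v (a * b)) 1 ≤ v (a ^ 2) ∧ min (v (a * b)) 1 ≤ v (b ^ 2) := by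
    simp only [map_pow, map_mul, two_nsmul]
    rcases h with ⟨ha, hb⟩ | h
    · exact ⟨(min_le_right _ _).trans (WithTop.one_lt_add_of_one_le ha ha).le,
        (min_le_right _ _).trans (WithTop.one_lt_add_of_one_le hb hb).le⟩
    · rw [h]; exact ⟨min_le_left _ _, min_le_left _ _⟩
  rw [map_add_of_distinct_val v hab, hπ]
  exact map_le_add v (map_le_add v hsq.1
    ((min_le_right _ _).trans (one_le_map_mul_of_map_eq_one v hπ hε))) hsq.2

lemma map_sq_add_sq_lt_map_mul_add (hπ : v π = 1) (hε : 0 ≤ v ε) (hab : v a < v b)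
    (ha : v a < 1) : v (a ^ 2 + ε * π + b ^ 2) < v (a * b + π) := by
  have ha_ne_top : v a ≠ ⊤ := (ha.trans WithTop.one_lt_top).ne
  have hsq : v (a ^ 2) = v a + v a := by rw [map_pow, two_nsmul]
  have hεπ : v (a ^ 2) < v (ε * π) :=
    hsq ▸ (WithTop.add_self_lt_one_of_lt_one ha).trans_le (one_le_map_mul_of_map_eq_one v hπ hε)
  have hb : v (a ^ 2) < v (b ^ 2) := by
    rw [hsq, map_pow, two_nsmul]
    exact WithTop.add_lt_add hab hab
  have hN : v (a ^ 2 + ε * π + b ^ 2) = v a + v a := by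
    rw [← hsq, map_add_eq_of_lt_left v (by rwa [map_add_eq_of_lt_left v hεπ]),
      map_add_eq_of_lt_left v hεπ]
  rw [hN]
  refine lt_of_lt_of_le (lt_min ?_ ?_) (map_add v _ _)
  · rw [map_mul]; exact WithTop.add_lt_add_left ha_ne_top hab
  · rw [hπ]; exact WithTop.add_self_lt_one_of_lt_one ha

theorem map_mul_add_le_map_sq_add_sq_iff (hπ : v π = 1) (hε : 0 ≤ v ε) :
    v (a * b + π) ≤ v (a ^ 2 + ε * π + b ^ 2) ↔ (1 ≤ v a ∧ 1 ≤ v b) ∨ v a = v b := by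
  refine ⟨fun h => ?_, map_mul_add_le_map_sq_add_sq v hπ hε⟩
  by_contra! hne
  obtain ⟨hnot_both, hne⟩ := hne
  rcases lt_or_gt_of_ne hne with hab | hba
  · have ha : v a < 1 := lt_of_not_ge fun ha => (hnot_both ha).not_ge (ha.trans hab.le)
    exact (map_sq_add_sq_lt_map_mul_add v hπ hε hab ha).not_ge h
  · have hb : v b < 1 := lt_of_not_ge fun hb => (hnot_both (hb.trans hba.le)).not_ge hb
    have := map_sq_add_sq_lt_map_mul_add v hπ hε hba hb
    rw [mul_comm b a, show b ^ 2 + ε * π + a ^ 2 = a ^ 2 + ε * π + b ^ 2 by ring] at this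
    exact this.not_ge h

lemma one_le_iff_le_of_mul_eq {K : Type*} [Field K] (v : AddValuation K (WithTop ℤ))
    {π c d n : K} (hπ : v π = 1) (hd : d ≠ 0) (h : c * d = π * n) : 1 ≤ v c ↔ v d ≤ v n := by
  have hv : v c + v d = 1 + v n := by rw [← hπ, ← map_mul, ← map_mul, h]
  calc 1 ≤ v c ↔ 1 + v d ≤ v c + v d := (WithTop.add_le_add_iff_right ((v.ne_top_iff).2 hd)).symm
    _ ↔ v d ≤ v n := by rw [hv, WithTop.add_le_add_iff_left WithTop.one_ne_top]

end AddValuation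

namespace Padic

variable {p : ℕ} [Fact p.Prime]

lemma natCast_p_ne_zero : (p : ℚ_[p]) ≠ 0 := Nat.cast_ne_zero.2 (Fact.out : p.Prime).ne_zero

lemma addValuation_p : addValuation (p : ℚ_[p]) = 1 := by
  rw [addValuation.apply natCast_p_ne_zero, valuation_p]
  rfl

lemma eq_zero_or_le_valuation_iff (x : ℚ_[p]) (m : ℤ) :
    (x = 0 ∨ m ≤ x.valuation) ↔ (m : WithTop ℤ) ≤ addValuation x := by
  rcases eq_or_ne x 0 with rfl | hx
  · simp
  · simp [hx, addValuation.apply hx]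

lemma eq_zero_or_nonneg_valuation_iff (x : ℚ_[p]) :
    (x = 0 ∨ 0 ≤ x.valuation) ↔ 1 ≤ addValuation (x * (p : ℚ_[p])) := by
  rw [eq_zero_or_le_valuation_iff, _root_.AddValuation.map_mul, addValuation_p, WithTop.coe_zero,
    ← WithTop.add_le_add_iff_right WithTop.one_ne_top, zero_add]

lemma valuation_eq_valuation_add_one_iff (a b : ℚ_[p]) :
    (a ≠ 0 ∧ b ≠ 0 ∧ a.valuation = b.valuation + 1) ↔
      b ≠ 0 ∧ addValuation a = addValuation (b * (p : ℚ_[p])) := by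
  refine ⟨fun ⟨ha, hb, h⟩ => ⟨hb, ?_⟩, fun ⟨hb, h⟩ => ?_⟩
  · rw [addValuation.apply ha, addValuation.apply (mul_ne_zero hb natCast_p_ne_zero),
      valuation_mul hb natCast_p_ne_zero, valuation_p, h]
  · have ha : a ≠ 0 := by
      rw [← addValuation.ne_top_iff, h, addValuation.ne_top_iff]
      exact mul_ne_zero hb natCast_p_ne_zero
    rw [addValuation.apply ha, addValuation.apply (mul_ne_zero hb natCast_p_ne_zero),
      valuation_mul hb natCast_p_ne_zero, valuation_p] at h
    exact ⟨ha, hb, WithTop.coe_injective h⟩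

end Padic

theorem stmt6_general (p : ℕ) [Fact p.Prime]
    (ε : ℚ_[p]) (hε : ε = 0 ∨ ε = 1 ∨ ε = -1)
    (a b : ℚ_[p]) (hab : a * b ≠ -1)
    (c : ℚ_[p]) (hc : c = -(a ^ 2 + ε * p + b ^ 2 * (p : ℚ_[p]) ^ 2) / (a * b + 1)) :
    (c = 0 ∨ 1 ≤ c.valuation) ↔
      (((a = 0 ∨ 1 ≤ a.valuation) ∧ (b = 0 ∨ 0 ≤ b.valuation)) ∨
        (a ≠ 0 ∧ b ≠ 0 ∧ a.valuation = b.valuation + 1)) := by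
  set v : AddValuation ℚ_[p] (WithTop ℤ) := Padic.addValuation
  have hε : 0 ≤ v ε := by rcases hε with rfl | rfl | rfl <;> simp
  have hab : a * b + 1 ≠ 0 := fun h => hab (eq_neg_of_add_eq_zero_left h)
  have hd : a * (b * p) + p ≠ 0 := by
    rw [show a * (b * p) + p = p * (a * b + 1) by ring]
    exact mul_ne_zero Padic.natCast_p_ne_zero hab
  have hmul : c * (a * (b * p) + p) = p * -(a ^ 2 + ε * p + (b * p) ^ 2) := by
    rw [hc]; field_simp
  rw [Padic.eq_zero_or_le_valuation_iff, Padic.eq_zero_or_le_valuation_iff,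
    Padic.eq_zero_or_nonneg_valuation_iff, Padic.valuation_eq_valuation_add_one_iff, WithTop.coe_one,
    v.one_le_iff_le_of_mul_eq Padic.addValuation_p hd hmul, v.map_neg,
    v.map_mul_add_le_map_sq_add_sq_iff Padic.addValuation_p hε]
  have hb_zero : v a = v (b * p) → b = 0 → 1 ≤ v a ∧ 1 ≤ v (b * p) := by
    rintro h rfl; simp [h]
  tauto

/-- for `p ≥ 5` prime, `ε ∈ {0,1,-1}` and `a b : ℚ_p` with `ab ≠ -1`,
setting `c = -(a² + εp + b²p²)/(ab+1)`, one has `v_p(c) ≥ 1` iff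
(`v_p(a) ≥ 1` and `v_p(b) ≥ 0`) or `v_p(a) = v_p(b) + 1`.  The convention
`v_p(0) = +∞` is encoded by treating the case of a vanishing argument separately. -/
theorem stmt6 (p : ℕ) [Fact p.Prime] (hp5 : 5 ≤ p)
    (ε : ℚ_[p]) (hε : ε = 0 ∨ ε = 1 ∨ ε = -1)
    (a b : ℚ_[p]) (hab : a * b ≠ -1)
    (c : ℚ_[p]) (hc : c = -(a ^ 2 + ε * p + b ^ 2 * (p : ℚ_[p]) ^ 2) / (a * b + 1)) :
    (c = 0 ∨ 1 ≤ c.valuation) ↔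
      (((a = 0 ∨ 1 ≤ a.valuation) ∧ (b = 0 ∨ 0 ≤ b.valuation)) ∨
        (a ≠ 0 ∧ b ≠ 0 ∧ a.valuation = b.valuation + 1)) :=
  stmt6_general p ε hε a b hab c hc
end

section
/- Let p ≥ 5 be prime, ε ∈ {0,1,−1}, ε' ∈ {±1}, and a, b, c, d ∈ ℚ_p. If the 4×4 matrix φ with block form [[0, ε'p·I₂],[I₂, N]], where N = [[a,c],[b,d]], has characteristic polynomial X⁴+εpX²+p², then a + d = 0 and ad − bc = (ε+2ε')p; moreover b ≠ 0 (since otherwise a² = −(ε+2ε')p ∈ {±p, ±2p, ±3p}, which has no solution in ℚ_p for p ≥ 5). -/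
open Matrix Polynomial

set_option maxHeartbeats 1000000 in
theorem charpoly_calc_aux (p : ℕ) [Fact p.Prime] (ε' a b c d : ℚ_[p]) :
    (Matrix.fromBlocks 0 ((ε' * p) • (1 : Matrix (Fin 2) (Fin 2) ℚ_[p])) 1
      !![a, c; b, d]).charpoly
    = X^4 - C (a+d) * X^3 + C (a*d - b*c - 2*(ε'*p)) * X^2 + C ((ε'*p)*(a+d)) * X
      + C ((ε'*p)*(ε'*p)) := by
  rw [← Matrix.charpoly_reindex finSumFinEquiv]
  have h1 : (reindex finSumFinEquiv finSumFinEquiv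
      (Matrix.fromBlocks 0 ((ε' * p) • (1 : Matrix (Fin 2) (Fin 2) ℚ_[p])) 1 !![a, c; b, d]))
      = !![0, 0, ε'*p, 0; 0, 0, 0, ε'*p; 1, 0, a, c; 0, 1, b, d] := by
    ext i j
    fin_cases i <;> fin_cases j <;>
      first
        | rfl
        | (show ε' * ↑p * _ = _; norm_num [Matrix.one_apply, Fin.ext_iff, Fin.castLT])
  rw [h1, Matrix.charpoly]
  have h2 : charmatrix !![0, 0, ε'*p, 0; 0, 0, 0, ε'*p; 1, 0, a, c; 0, 1, b, d]
      = !![(X : ℚ_[p][X]), 0, -C (ε'*p), 0; 0, X, 0, -C (ε'*p);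
           -1, 0, X - C a, -C c; 0, -1, -C b, X - C d] := by
    ext i j
    fin_cases i <;> fin_cases j <;> simp [charmatrix_apply]
  rw [h2]
  simp [Matrix.det_succ_row_zero, Fin.sum_univ_succ,
    show ((2:Fin 4).succAbove 2) = 3 by decide, _root_.map_mul, map_ofNat C 2]
  ring

lemma no_sqrt_aux (p : ℕ) [Fact p.Prime] (m : ℤ) (hm : m ≠ 0) (hmlt : m.natAbs < p)
    (a : ℚ_[p]) (h : a ^ 2 = (m : ℚ_[p]) * p) : False := by
  have hm0 : (m : ℚ_[p]) ≠ 0 := Int.cast_ne_zero.mpr hm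
  have hp0 : ((p : ℕ) : ℚ_[p]) ≠ 0 := Nat.cast_ne_zero.mpr (Fact.out (p := p.Prime)).pos.ne'
  have ha : a ≠ 0 := by
    intro h0
    rw [h0] at h
    simp at h
    rcases h with h | h
    · exact hm0 (by exact_mod_cast h)
    · exact hp0 (by exact_mod_cast h)
  have hv := congrArg Padic.valuation h
  rw [pow_two, Padic.valuation_mul ha ha, Padic.valuation_mul hm0 hp0,
    Padic.valuation_p, Padic.valuation_intCast] at hv
  have hval : padicValInt p m = 0 := by
    unfold padicValInt
    exact padicValNat.eq_zero_of_not_dvd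
      (fun hd => absurd (Nat.le_of_dvd (Int.natAbs_pos.mpr hm) hd) (not_le.mpr hmlt))
  rw [hval] at hv
  omega

theorem stmt11 (p : ℕ) [Fact p.Prime] (hp5 : 5 ≤ p)
    (ε : ℚ_[p]) (hε : ε = 0 ∨ ε = 1 ∨ ε = -1)
    (ε' : ℚ_[p]) (hε' : ε' = 1 ∨ ε' = -1)
    (a b c d : ℚ_[p])
    (φ : Matrix (Fin 2 ⊕ Fin 2) (Fin 2 ⊕ Fin 2) ℚ_[p])
    (hφ : φ = Matrix.fromBlocks 0 ((ε' * p) • (1 : Matrix (Fin 2) (Fin 2) ℚ_[p])) 1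
      !![a, c; b, d])
    (hchar : φ.charpoly = X ^ 4 + C (ε * p) * X ^ 2 + C ((p : ℚ_[p]) ^ 2)) :
    a + d = 0 ∧ a * d - b * c = (ε + 2 * ε') * p ∧ b ≠ 0 := by
  subst hφ
  rw [charpoly_calc_aux] at hchar
  have h3 := congrArg (fun q => q.coeff 3) hchar
  have h2 := congrArg (fun q => q.coeff 2) hchar
  simp only [coeff_add, coeff_sub, coeff_C_mul, coeff_C, coeff_X_pow, coeff_X] at h3 h2
  norm_num at h3 h2
  have had : a + d = 0 := by linear_combination -h3
  have hdet : a * d - b * c = (ε + 2 * ε') * p := by linear_combination h2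
  refine ⟨had, hdet, ?_⟩
  intro hb
  have hd : d = -a := by linear_combination had
  rw [hb, hd] at hdet
  have hsq : a ^ 2 = -((ε + 2 * ε') * p) := by linear_combination -hdet
  rcases hε with rfl | rfl | rfl <;> rcases hε' with rfl | rfl
  · exact no_sqrt_aux p (-2) (by norm_num) (by omega) a (by push_cast; linear_combination hsq)
  · exact no_sqrt_aux p 2 (by norm_num) (by omega) a (by push_cast; linear_combination hsq)
  · exact no_sqrt_aux p (-3) (by norm_num) (by omega) a (by push_cast; linear_combination hsq)
  · exact no_sqrt_aux p 1 (by norm_num) (by omega) a (by push_cast; linear_combination hsq)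
  · exact no_sqrt_aux p (-1) (by norm_num) (by omega) a (by push_cast; linear_combination hsq)
  · exact no_sqrt_aux p 3 (by norm_num) (by omega) a (by push_cast; linear_combination hsq)
end

section
/- Let D be the set of tuples d = (d₁₂,d₁₃,d₁₄,d₂₃,d₂₄,d₃₄) ∈ ℤ_{≥0}⁶ with d₁₂d₃₄ = d₁₃d₂₄ = d₁₄d₂₃ = 0. For d ∈ ℤ_{≥0}⁶ and k ∈ {1,2,3,4}, let Φ_k(d) = Σ_{j: k ∈ {i,j}} d_{ij} (the sum of the three coordinates whose index pair contains k). Then for every n ≥ 1, there is no d ∈ D with Φ₁(d) = Φ₂(d) = Φ₃(d) = Φ₄(d) = n. -/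
theorem stmt15 (n : ℕ) (hn : 1 ≤ n) :
    ¬ ∃ d₁₂ d₁₃ d₁₄ d₂₃ d₂₄ d₃₄ : ℕ,
      d₁₂ * d₃₄ = 0 ∧ d₁₃ * d₂₄ = 0 ∧ d₁₄ * d₂₃ = 0 ∧
      d₁₂ + d₁₃ + d₁₄ = n ∧
      d₁₂ + d₂₃ + d₂₄ = n ∧
      d₁₃ + d₂₃ + d₃₄ = n ∧
      d₁₄ + d₂₄ + d₃₄ = n := by
  rintro ⟨d₁₂, d₁₃, d₁₄, d₂₃, d₂₄, d₃₄, h₁₂, h₁₃, h₁₄, h₁, h₂, h₃, h₄⟩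
  -- Φ₁ + Φ₂ - Φ₃ - Φ₄ = 2 (d₁₂ - d₃₄), and likewise for the other two splittings of {1,2,3,4}.
  have e₁₂ : d₁₂ = d₃₄ := by omega
  have e₁₃ : d₁₃ = d₂₄ := by omega
  have e₁₄ : d₁₄ = d₂₃ := by omega
  rw [e₁₂, mul_self_eq_zero] at h₁₂
  rw [e₁₃, mul_self_eq_zero] at h₁₃
  rw [e₁₄, mul_self_eq_zero] at h₁₄
  omega
end
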